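/- Let X be an n-independent set of d(n,k−1) + 2 points in ℝ², where 1 ≤ k ≤ n and d(n,k−1) = (k−1)(2n+4−k)/2. Then at most one curve of degree k passes through all points of X; i.e., any two polynomials of degree at most k vanishing on X are proportional (up to scalar multiple). -/

import Mathlib

open MvPolynomial

/-- `p` is an `n`-fundamental polynomial of the node `A` with respect to the node set `X`. -/
def IsFund (n : ℕ) (X : Finset (Fin 2 → ℝ)) (A : Fin 2 → ℝ)
    (p : MvPolynomial (Fin 2) ℝ) : Prop :=
  p.totalDegree ≤ n ∧ eval A p = 1 ∧ ∀ B ∈ X, B ≠ A → eval B p = 0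

/-- The node set `X` is `n`-independent: every node has an `n`-fundamental polynomial. -/
def NInd (n : ℕ) (X : Finset (Fin 2 → ℝ)) : Prop :=
  ∀ A ∈ X, ∃ p, IsFund n X A p

/-!
Write `Π_m` for the polynomials of degree at most `m` and `a = n - k`. If `p`, `q` are independent,
of degree at most `k` and vanish on `X`, then so does `W = p Π_a + q Π_a ⊆ Π_n`, and since `X` is
`n`-independent, evaluation maps `Π_n` onto `ℝ^X` with kernel containing `W`, so
`|X| + dim W ≤ dim Π_n`. Cancelling `gcd(p, q)` leaves a nonconstant cofactor `f`, say with
`q ∣ p g → f ∣ g`; then `p Π_a ∩ q Π_a ⊆ p f Π_(a-1)` (and is `0` if `a = 0`), so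
`dim W ≥ 2 dim Π_a - dim Π_(a-1) = dim Π_(a+1) - 1`. But `|X| = dim Π_n - dim Π_(a+1) + 2`,
so `|X| + dim W > dim Π_n`.
-/

open Module Submodule

theorem Submodule.finrank_map_add_finrank_le_of_le_ker {K V U : Type*} [Field K]
    [AddCommGroup V] [Module K V] [AddCommGroup U] [Module K U] (E : V →ₗ[K] U)
    {S W : Submodule K V} [FiniteDimensional K S] (hWS : W ≤ S) (hWE : W ≤ LinearMap.ker E) :
    finrank K (S.map E) + finrank K W ≤ finrank K S := by
  have hker : finrank K W ≤ finrank K (LinearMap.ker (E.domRestrict S)) := by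
    rw [LinearMap.ker_domRestrict, ← (comapSubtypeEquivOfLe hWS).finrank_eq]
    exact finrank_mono (comap_mono hWE)
  have := LinearMap.finrank_range_add_finrank_ker (E.domRestrict S)
  rw [LinearMap.range_domRestrict] at this
  omega

namespace MvPolynomial

section Dimension

variable {K : Type*} [Field K]

theorem two_mul_finrank_restrictTotalDegree_fin_two (m : ℕ) :
    2 * finrank K (restrictTotalDegree (Fin 2) K m) = (m + 1) * (m + 2) := by
  classical
  let F : Finset (Fin 2 →₀ ℕ) := (Finset.range (m + 1)).biUnion (Finset.univ.finsuppAntidiag ·)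
  have hF : {s : Fin 2 →₀ ℕ | (s.sum fun _ e => e) ≤ m} = F := by
    ext s
    simp [F, Finset.mem_finsuppAntidiag, Finsupp.sum_fintype]
  have hcard : F.card = ∑ c ∈ Finset.range (m + 1), (c + 1) := by
    rw [Finset.card_biUnion]
    · refine Finset.sum_congr rfl fun c _ => ?_
      simp [Finset.card_finsuppAntidiag_nat_eq_choose, add_comm 1 c]
    · intro c _ d _ hcd
      refine Finset.disjoint_left.mpr fun s hc hd => hcd ?_
      rw [Finset.mem_finsuppAntidiag] at hc hd
      exact hc.1.symm.trans hd.1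
  have gauss : 2 * ∑ c ∈ Finset.range (m + 1), (c + 1) = (m + 1) * (m + 2) := by
    rw [Finset.sum_add_distrib, mul_add, mul_comm, Finset.sum_range_id_mul_two]
    simp only [Finset.sum_const, Finset.card_range, smul_eq_mul, Nat.add_sub_cancel]
    ring
  rw [restrictTotalDegree, finrank_eq_nat_card_basis (basisRestrictSupport K _), hF,
    Nat.card_coe_set_eq, Set.ncard_coe_finset, hcard, gauss]

theorem finrank_restrictTotalDegree_fin_two_succ (m : ℕ) :
    finrank K (restrictTotalDegree (Fin 2) K (m + 1)) =
      finrank K (restrictTotalDegree (Fin 2) K m) + (m + 2) := by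
  have h := two_mul_finrank_restrictTotalDegree_fin_two (K := K) m
  have h' := two_mul_finrank_restrictTotalDegree_fin_two (K := K) (m + 1)
  nlinarith

/-- The number `d(n, k - 1) = (k - 1)(2n + 4 - k)/2` of the theorem is `dim Π_n - dim Π_(n-k+1)`. -/
theorem finrank_restrictTotalDegree_fin_two_eq {n k : ℕ} (hk1 : 1 ≤ k) (hkn : k ≤ n) :
    finrank K (restrictTotalDegree (Fin 2) K n) =
      (k - 1) * (2 * n + 4 - k) / 2 + finrank K (restrictTotalDegree (Fin 2) K (n - k + 1)) := by
  obtain ⟨j, rfl⟩ : ∃ j, k = j + 1 := ⟨k - 1, by omega⟩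
  obtain ⟨a, rfl⟩ : ∃ a, n = j + a + 1 := ⟨n - (j + 1), by omega⟩
  have h := two_mul_finrank_restrictTotalDegree_fin_two (K := K) (j + a + 1)
  have h' := two_mul_finrank_restrictTotalDegree_fin_two (K := K) (a + 1)
  rw [show j + a + 1 - (j + 1) + 1 = a + 1 by omega, show j + 1 - 1 = j by omega,
    show 2 * (j + a + 1) + 4 - (j + 1) = j + 2 * a + 5 by omega]
  have : j * (j + 2 * a + 5) + (a + 1 + 1) * (a + 1 + 2) = (j + a + 1 + 1) * (j + a + 1 + 2) := by
    ring
  omega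

end Dimension

section Multiples

variable {σ K : Type*} [Field K]

noncomputable def mulRestrictTotalDegree (f : MvPolynomial σ K) (m : ℕ) :
    Submodule K (MvPolynomial σ K) :=
  (restrictTotalDegree σ K m).map (LinearMap.mulLeft K f)

variable {f p q x : MvPolynomial σ K} {m : ℕ}

instance [Finite σ] : FiniteDimensional K (mulRestrictTotalDegree f m) :=
  Module.Finite.map _ _

theorem mem_mulRestrictTotalDegree :
    x ∈ mulRestrictTotalDegree f m ↔ ∃ g, g.totalDegree ≤ m ∧ f * g = x := by
  simp [mulRestrictTotalDegree, mem_restrictTotalDegree]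

theorem mulRestrictTotalDegree_le {d : ℕ} (hf : f.totalDegree ≤ d) :
    mulRestrictTotalDegree f m ≤ restrictTotalDegree σ K (d + m) := by
  intro x hx
  obtain ⟨g, hg, rfl⟩ := mem_mulRestrictTotalDegree.mp hx
  rw [mem_restrictTotalDegree]
  exact (totalDegree_mul f g).trans (by omega)

theorem finrank_mulRestrictTotalDegree (hf : f ≠ 0) :
    finrank K (mulRestrictTotalDegree f m) = finrank K (restrictTotalDegree σ K m) :=
  (equivMapOfInjective _ (mul_right_injective₀ hf) _).finrank_eq.symm

theorem eval_eq_zero_of_mem_mulRestrictTotalDegree {A : σ → K} (hf : eval A f = 0)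
    (hx : x ∈ mulRestrictTotalDegree f m) : eval A x = 0 := by
  obtain ⟨g, -, rfl⟩ := mem_mulRestrictTotalDegree.mp hx
  rw [map_mul, hf, zero_mul]

theorem totalDegree_lt_totalDegree_mul (hf : 0 < f.totalDegree) {u : MvPolynomial σ K}
    (hu : u ≠ 0) : u.totalDegree < (f * u).totalDegree := by
  rw [totalDegree_mul_of_isDomain (by rintro rfl; simp at hf) hu]
  omega

theorem exists_eq_mul_of_mem_mulRestrictTotalDegree_inf (hdvd : ∀ g, q ∣ p * g → f ∣ g)
    (hx : x ∈ mulRestrictTotalDegree p m ⊓ mulRestrictTotalDegree q m) :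
    ∃ u, (f * u).totalDegree ≤ m ∧ x = p * f * u := by
  obtain ⟨⟨g, hg, rfl⟩, ⟨h, -, hqh⟩⟩ := And.imp mem_mulRestrictTotalDegree.mp
    mem_mulRestrictTotalDegree.mp (mem_inf.mp hx)
  obtain ⟨u, rfl⟩ := hdvd g ⟨h, hqh.symm⟩
  exact ⟨u, hg, (mul_assoc _ _ _).symm⟩

theorem mulRestrictTotalDegree_zero_inf_eq_bot (hdvd : ∀ g, q ∣ p * g → f ∣ g)
    (hf : 0 < f.totalDegree) :
    mulRestrictTotalDegree p 0 ⊓ mulRestrictTotalDegree q 0 = ⊥ := by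
  refine eq_bot_iff.mpr fun x hx => ?_
  obtain ⟨u, hu, rfl⟩ := exists_eq_mul_of_mem_mulRestrictTotalDegree_inf hdvd hx
  obtain rfl : u = 0 := by
    by_contra hu0
    have := totalDegree_lt_totalDegree_mul hf hu0
    omega
  simp

theorem mulRestrictTotalDegree_succ_inf_le (hdvd : ∀ g, q ∣ p * g → f ∣ g)
    (hf : 0 < f.totalDegree) (m : ℕ) :
    mulRestrictTotalDegree p (m + 1) ⊓ mulRestrictTotalDegree q (m + 1) ≤
      mulRestrictTotalDegree (p * f) m := by
  intro x hx
  obtain ⟨u, hu, rfl⟩ := exists_eq_mul_of_mem_mulRestrictTotalDegree_inf hdvd hx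
  refine mem_mulRestrictTotalDegree.mpr ⟨u, ?_, rfl⟩
  rcases eq_or_ne u 0 with rfl | hu0
  · simp
  · have := totalDegree_lt_totalDegree_mul hf hu0
    omega

end Multiples

section Pencil

variable {K : Type*} [Field K] {f p q : MvPolynomial (Fin 2) K}

theorem finrank_mulRestrictTotalDegree_inf_add_le (hdvd : ∀ g, q ∣ p * g → f ∣ g)
    (hf : 0 < f.totalDegree) (m : ℕ) :
    finrank K ↥(mulRestrictTotalDegree p m ⊓ mulRestrictTotalDegree q m) + (m + 1) ≤
      finrank K (restrictTotalDegree (Fin 2) K m) := by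
  cases m with
  | zero =>
    have := two_mul_finrank_restrictTotalDegree_fin_two (K := K) 0
    rw [mulRestrictTotalDegree_zero_inf_eq_bot hdvd hf, finrank_bot]
    omega
  | succ m =>
    have hinf := finrank_mono (mulRestrictTotalDegree_succ_inf_le hdvd hf m)
    have hpf : finrank K (mulRestrictTotalDegree (p * f) m) ≤
        finrank K (restrictTotalDegree (Fin 2) K m) := finrank_map_le _ _
    rw [finrank_restrictTotalDegree_fin_two_succ]
    omega

theorem finrank_restrictTotalDegree_succ_le_sup (hp : p ≠ 0) (hq : q ≠ 0)
    (hdvd : ∀ g, q ∣ p * g → f ∣ g) (hf : 0 < f.totalDegree) (m : ℕ) :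
    finrank K (restrictTotalDegree (Fin 2) K (m + 1)) ≤
      finrank K ↥(mulRestrictTotalDegree p m ⊔ mulRestrictTotalDegree q m) + 1 := by
  have hsum := finrank_sup_add_finrank_inf_eq (mulRestrictTotalDegree p m)
    (mulRestrictTotalDegree q m)
  rw [finrank_mulRestrictTotalDegree hp, finrank_mulRestrictTotalDegree hq] at hsum
  have hinf := finrank_mulRestrictTotalDegree_inf_add_le hdvd hf m
  rw [finrank_restrictTotalDegree_fin_two_succ]
  omega

end Pencil

/-- `f` is a nonconstant one of `p / gcd(p, q)` and `q / gcd(p, q)`. -/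
theorem exists_cofactor_of_linearIndependent {σ K : Type*} [Field K]
    {p q : MvPolynomial σ K} (hpq : LinearIndependent K ![p, q]) :
    ∃ f : MvPolynomial σ K, 0 < f.totalDegree ∧
      ((∀ g, q ∣ p * g → f ∣ g) ∨ (∀ g, p ∣ q * g → f ∣ g)) := by
  have hp : p ≠ 0 := by simpa using hpq.ne_zero 0
  obtain ⟨p', q', c, hrel, rfl, rfl⟩ := UniqueFactorizationMonoid.exists_reduced_factors p hp q
  have hc : c ≠ 0 := left_ne_zero_of_mul hp
  by_cases hq' : q'.totalDegree = 0
  · by_cases hp' : p'.totalDegree = 0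
    · obtain ⟨α, rfl⟩ : ∃ α, p' = C α := ⟨_, totalDegree_eq_zero_iff_eq_C.mp hp'⟩
      obtain ⟨β, rfl⟩ : ∃ β, q' = C β := ⟨_, totalDegree_eq_zero_iff_eq_C.mp hq'⟩
      have hα : α ≠ 0 := by rintro rfl; simp at hp
      have hdep := LinearIndependent.pair_iff.mp hpq β (-α) (by
        rw [smul_eq_C_mul, smul_eq_C_mul, map_neg]; ring)
      exact absurd (neg_eq_zero.mp hdep.2) hα
    · refine ⟨p', Nat.pos_of_ne_zero hp', Or.inr fun g hg => hrel.dvd_of_dvd_mul_left ?_⟩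
      rwa [mul_assoc, mul_dvd_mul_iff_left hc] at hg
  · refine ⟨q', Nat.pos_of_ne_zero hq', Or.inl fun g hg => hrel.symm.dvd_of_dvd_mul_left ?_⟩
    rwa [mul_assoc, mul_dvd_mul_iff_left hc] at hg

end MvPolynomial

noncomputable def evalNodes (X : Finset (Fin 2 → ℝ)) : MvPolynomial (Fin 2) ℝ →ₗ[ℝ] (X → ℝ) :=
  LinearMap.pi fun A => (aeval (A : Fin 2 → ℝ)).toLinearMap

theorem evalNodes_apply (X : Finset (Fin 2 → ℝ)) (f : MvPolynomial (Fin 2) ℝ) (A : X) :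
    evalNodes X f A = eval (A : Fin 2 → ℝ) f := by
  simp [evalNodes]

theorem mulRestrictTotalDegree_le_ker_evalNodes {X : Finset (Fin 2 → ℝ)}
    {f : MvPolynomial (Fin 2) ℝ} (hf : ∀ A ∈ X, eval A f = 0) (m : ℕ) :
    mulRestrictTotalDegree f m ≤ LinearMap.ker (evalNodes X) := fun x hx =>
  LinearMap.mem_ker.mpr <| funext fun A => by
    rw [evalNodes_apply, eval_eq_zero_of_mem_mulRestrictTotalDegree (hf A A.2) hx, Pi.zero_apply]

namespace NInd

variable {n : ℕ} {X : Finset (Fin 2 → ℝ)}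

/-- Lagrange interpolation with the fundamental polynomials. -/
theorem map_evalNodes_eq_top (hX : NInd n X) :
    (restrictTotalDegree (Fin 2) ℝ n).map (evalNodes X) = ⊤ := by
  refine eq_top_iff.mpr fun v _ => ?_
  choose ℓ hℓ using fun A : X => hX A A.2
  refine ⟨∑ A, v A • ℓ A, sum_mem fun A _ => smul_mem _ _ ((mem_restrictTotalDegree _ _ _).mpr
    (hℓ A).1), funext fun B => ?_⟩
  rw [map_sum, Finset.sum_apply, Finset.sum_eq_single B]
  · simp [evalNodes_apply, (hℓ B).2.1]
  · intro A _ hAB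
    simp [evalNodes_apply, (hℓ A).2.2 B B.2 fun h => hAB (Subtype.ext h).symm]
  · simp

theorem card_add_finrank_le (hX : NInd n X) {W : Submodule ℝ (MvPolynomial (Fin 2) ℝ)}
    (hWn : W ≤ restrictTotalDegree (Fin 2) ℝ n) (hWX : W ≤ LinearMap.ker (evalNodes X)) :
    X.card + finrank ℝ W ≤ finrank ℝ (restrictTotalDegree (Fin 2) ℝ n) := by
  have := finrank_map_add_finrank_le_of_le_ker (evalNodes X) hWn hWX
  rwa [hX.map_evalNodes_eq_top, finrank_top, finrank_fintype_fun_eq_card,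
    Fintype.card_coe] at this

end NInd

/-- An n-independent set of d(n,k−1)+2 points determines a curve of degree k uniquely:
any two polynomials of degree ≤ k vanishing on it are linearly dependent. -/
theorem stmt_15 (n k : ℕ) (hk1 : 1 ≤ k) (hkn : k ≤ n) (X : Finset (Fin 2 → ℝ))
    (hInd : NInd n X) (hcard : X.card = (k - 1) * (2 * n + 4 - k) / 2 + 2) :
    ∀ p q : MvPolynomial (Fin 2) ℝ, p.totalDegree ≤ k → q.totalDegree ≤ k →
      (∀ A ∈ X, eval A p = 0) → (∀ A ∈ X, eval A q = 0) →
      ¬ LinearIndependent ℝ ![p, q] := by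
  intro p q hpk hqk hpX hqX hpq
  have hp : p ≠ 0 := by simpa using hpq.ne_zero 0
  have hq : q ≠ 0 := by simpa using hpq.ne_zero 1
  set W := mulRestrictTotalDegree p (n - k) ⊔ mulRestrictTotalDegree q (n - k)
  have hWn : W ≤ restrictTotalDegree (Fin 2) ℝ n := by
    rw [← Nat.add_sub_cancel' hkn]
    exact sup_le (mulRestrictTotalDegree_le hpk) (mulRestrictTotalDegree_le hqk)
  have hWX : W ≤ LinearMap.ker (evalNodes X) :=
    sup_le (mulRestrictTotalDegree_le_ker_evalNodes hpX _)
      (mulRestrictTotalDegree_le_ker_evalNodes hqX _)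
  have hW : finrank ℝ (restrictTotalDegree (Fin 2) ℝ (n - k + 1)) ≤ finrank ℝ W + 1 := by
    obtain ⟨f, hf, hdvd | hdvd⟩ := exists_cofactor_of_linearIndependent hpq
    · exact finrank_restrictTotalDegree_succ_le_sup hp hq hdvd hf _
    · rw [show W = _ from sup_comm _ _]
      exact finrank_restrictTotalDegree_succ_le_sup hq hp hdvd hf _
  have hcount := hInd.card_add_finrank_le hWn hWX
  have hdim := finrank_restrictTotalDegree_fin_two_eq (K := ℝ) hk1 hkn
  omega
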